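/- arXiv:math/0309409 — 2 statements merged into one kernel-verified Lean document; each statement's English description precedes it below -/
import Mathlib

section
/- Let X' be a subdivision of a polyhedral set X (every polyhedron of X is a finite union of polyhedra of X', with the same underlying set), and let ψ' : 𝓕(X') → 𝓕(Y) refine ψ : 𝓕(X) → 𝓕(Y), meaning G' ⊆ G implies ψ'(G') ⊆ ψ(G). Then the combinatorial degree maps of ψ' and ψ on n-th homology coincide: c.deg ψ' = c.deg ψ. -/
/-!
STATEMENT 2: If `X'` is a subdivision of a polyhedral set `X` and
`ψ' : 𝓕(X') → 𝓕(Y)` refines `ψ : 𝓕(X) → 𝓕(Y)`, then the combinatorial degree maps of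
`ψ'` and `ψ` on n-th homology coincide, i.e. any characteristic map for `ψ'` and any
characteristic map for `ψ` induce the same map on homology (stated for every
homotopy-invariant functor, in particular the n-th singular homology functor).
-/

open CategoryTheory

structure PolyhedralSet (N : ℕ) where
  faces : Set (Set (Fin N → ℝ))
  finite : faces.Finite
  nonempty : ∀ G ∈ faces, G.Nonempty
  convex : ∀ G ∈ faces, Convex ℝ G
  compact : ∀ G ∈ faces, IsCompact G

def PolyhedralSet.carrier {N : ℕ} (X : PolyhedralSet N) : Set (Fin N → ℝ) := ⋃₀ X.faces

/-- Dimension bound: every face has affine dimension at most `n`, and some face attains it. -/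
def PolyhedralSet.IsOfDim {N : ℕ} (X : PolyhedralSet N) (n : ℕ) : Prop :=
  (∀ G ∈ X.faces, Module.finrank ℝ (vectorSpan ℝ G) ≤ n) ∧
    ∃ G ∈ X.faces, Module.finrank ℝ (vectorSpan ℝ G) = n

def IsFacePosetMap {N M : ℕ} (X : PolyhedralSet N) (Y : PolyhedralSet M)
    (ψ : Set (Fin N → ℝ) → Set (Fin M → ℝ)) : Prop :=
  (∀ G ∈ X.faces, ψ G ∈ Y.faces) ∧
    ∀ G ∈ X.faces, ∀ H ∈ X.faces, G ⊆ H → ψ G ⊆ ψ H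

/-- `X'` is a subdivision of `X`: same support, and every face of `X` is a finite
union of faces of `X'`. -/
def IsSubdivision {N : ℕ} (X' X : PolyhedralSet N) : Prop :=
  X'.carrier = X.carrier ∧
    ∀ G ∈ X.faces, ∃ S : Set (Set (Fin N → ℝ)), S ⊆ X'.faces ∧ G = ⋃₀ S

/-- `ψ'` refines `ψ`: `G' ⊆ G` implies `ψ' G' ⊆ ψ G`. -/
def Refines {N M : ℕ} (X' X : PolyhedralSet N)
    (ψ' ψ : Set (Fin N → ℝ) → Set (Fin M → ℝ)) : Prop :=
  ∀ G' ∈ X'.faces, ∀ G ∈ X.faces, G' ⊆ G → ψ' G' ⊆ ψ G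

def IsCharacteristicMapOn {N M : ℕ} (faces : Set (Set (Fin N → ℝ)))
    (Y : PolyhedralSet M) (ψ : Set (Fin N → ℝ) → Set (Fin M → ℝ))
    (carrier : Set (Fin N → ℝ)) (f : C(↥carrier, ↥Y.carrier)) : Prop :=
  ∀ G ∈ faces, ∀ x : ↥carrier, (x : Fin N → ℝ) ∈ G → (f x : Fin M → ℝ) ∈ ψ G

def HomotopyInvariant (H : TopCat.{0} ⥤ ModuleCat.{0} ℤ) : Prop :=
  ∀ (A B : TopCat.{0}) (g g' : A ⟶ B), g.hom.Homotopic g'.hom → H.map g = H.map g'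

theorem cdeg_invariant_under_subdivision
    {N M n : ℕ} (X X' : PolyhedralSet N) (Y : PolyhedralSet M)
    (hX : X.IsOfDim n) (hX' : X'.IsOfDim n) (hY : Y.IsOfDim n)
    (hsub : IsSubdivision X' X)
    (ψ ψ' : Set (Fin N → ℝ) → Set (Fin M → ℝ))
    (hψ : IsFacePosetMap X Y ψ) (hψ' : IsFacePosetMap X' Y ψ')
    (href : Refines X' X ψ' ψ)
    -- characteristic maps, both defined on the common support `X.carrier = X'.carrier`
    (f f' : C(↥X.carrier, ↥Y.carrier))
    (hf : IsCharacteristicMapOn X.faces Y ψ X.carrier f)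
    (hf' : IsCharacteristicMapOn X'.faces Y ψ' X.carrier f') :
    ∀ H : TopCat.{0} ⥤ ModuleCat.{0} ℤ, HomotopyInvariant H →
      (H.map (show TopCat.of ↥X.carrier ⟶ TopCat.of ↥Y.carrier from TopCat.ofHom f)
        = H.map (show TopCat.of ↥X.carrier ⟶ TopCat.of ↥Y.carrier from TopCat.ofHom f')) := by
  intro H hinv
  -- the straight-line homotopy stays in `Y.carrier`
  have key : ∀ (t : ℝ), t ∈ Set.Icc (0:ℝ) 1 → ∀ x : ↥X.carrier,
      (1 - t) • (f x : Fin M → ℝ) + t • (f' x : Fin M → ℝ) ∈ Y.carrier := by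
    intro t ht x
    obtain ⟨G, hG, hxG⟩ := x.2
    obtain ⟨S, hS, hGS⟩ := hsub.2 G hG
    have hxS : (x : Fin N → ℝ) ∈ ⋃₀ S := hGS ▸ hxG
    obtain ⟨G', hG'S, hxG'⟩ := hxS
    have hG' : G' ∈ X'.faces := hS hG'S
    have hsubGG' : G' ⊆ G := hGS ▸ Set.subset_sUnion_of_mem hG'S
    have hfx : (f x : Fin M → ℝ) ∈ ψ G := hf G hG x hxG
    have hf'x : (f' x : Fin M → ℝ) ∈ ψ G := href G' hG' G hG hsubGG' (hf' G' hG' x hxG')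
    have hψG : ψ G ∈ Y.faces := hψ.1 G hG
    have hmem : (1 - t) • (f x : Fin M → ℝ) + t • (f' x : Fin M → ℝ) ∈ ψ G :=
      (Y.convex _ hψG) hfx hf'x (by linarith [ht.2]) ht.1 (by ring)
    exact Set.subset_sUnion_of_mem hψG hmem
  let F : C(unitInterval × ↥X.carrier, ↥Y.carrier) :=
    ⟨fun p => ⟨(1 - (p.1 : ℝ)) • (f p.2 : Fin M → ℝ) + (p.1 : ℝ) • (f' p.2 : Fin M → ℝ),
        key _ p.1.2 _⟩, by
      apply Continuous.subtype_mk
      exact ((continuous_const.sub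
          (continuous_subtype_val.comp continuous_fst)).smul
          (continuous_subtype_val.comp (f.continuous.comp continuous_snd))).add
        ((continuous_subtype_val.comp continuous_fst).smul
          (continuous_subtype_val.comp (f'.continuous.comp continuous_snd)))⟩
  have hom : ContinuousMap.Homotopic f f' := by
    refine ⟨{ toContinuousMap := F, map_zero_left := ?_, map_one_left := ?_ }⟩
    · intro x
      apply Subtype.ext
      show (1 - ((0:unitInterval) : ℝ)) • (f x : Fin M → ℝ) + _ • _ = _
      simp
    · intro x
      apply Subtype.ext
      show (1 - ((1:unitInterval) : ℝ)) • (f x : Fin M → ℝ) + _ • _ = _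
      simp
  exact hinv _ _ _ _ hom
end

section
/- Let Σ be a complete simplicial fan in R^n and z_0,…,z_n squarefree monomials in the Cox variables with z_0⋯z_n = x_1⋯x_r which do not vanish simultaneously on X(Σ). Then for each k, the set Z_k̂ = {x ∈ X : z_i(x) = 0 for all i ≠ k} is finite; more precisely, Z_k̂ is the union of the torus-fixed points corresponding to maximal cones of Σ containing rays of all n colors i ≠ k. -/
/-!
STATEMENT 13: Let `S` be a complete simplicial (rational) fan in `ℝⁿ` with ray
generators `v 1, …, v r` and let `z_0, …, z_n` be squarefree monomials in the Cox
variables with `z_0 ⋯ z_n = x_1 ⋯ x_r` which do not vanish simultaneously on `X(S)`.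
Then for each `k` the set `Z_k̂ = {x ∈ X : z_i(x) = 0 ∀ i ≠ k}` is finite; more
precisely it is the union of the torus-fixed points corresponding to the maximal cones
of `S` containing rays of all `n` colors `i ≠ k`.

The toric variety is modelled by its Cox (homogeneous coordinate) construction:
`X = (ℂ^r ∖ Z(B)) / G`, points of `X` being `G`-orbits.  Finiteness of `Z_k̂` is
expressed as: the corresponding `G`-stable subset `W ⊆ ℂ^r ∖ Z(B)` is covered by
finitely many `G`-orbits; the precise description says `W` is the union of the orbits
of the distinguished points `x(σ)` of the fully-colored maximal cones `σ`. -/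

/-- Cones are recorded as index sets of their rays; `coneOf v s` is the actual cone. -/
def coneOf {n r : ℕ} (v : Fin r → Fin n → ℤ) (s : Finset (Fin r)) :
    Set (Fin n → ℝ) :=
  {x | ∃ t : Fin r → ℝ, (∀ j, 0 ≤ t j) ∧ (∀ j ∉ s, t j = 0) ∧
    x = ∑ j, t j • (fun i => (v j i : ℝ))}

/-- The group `G = Hom(A_{n-1}(X), ℂ*) ⊆ (ℂ*)^r` of the Cox construction. -/
def coxGroup {n r : ℕ} (v : Fin r → Fin n → ℤ) : Set (Fin r → ℂˣ) :=
  {g | ∀ m : Fin n → ℤ, ∏ j, g j ^ (∑ i, m i * v j i) = 1}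

/-- The complement `ℂ^r ∖ Z(B)` of the exceptional set of the Cox construction:
points whose zero coordinates are indexed by the rays of some (maximal) cone. -/
def coxU {n r : ℕ} (v : Fin r → Fin n → ℤ) (maxCones : Finset (Finset (Fin r))) :
    Set (Fin r → ℂ) :=
  {x | ∃ s ∈ maxCones, ∀ j, x j = 0 → j ∈ s}

/-- The `G`-orbit of a point of `ℂ^r`; points of `X` are such orbits. -/
def coxOrbit {n r : ℕ} (v : Fin r → Fin n → ℤ) (x : Fin r → ℂ) :
    Set (Fin r → ℂ) :=
  {y | ∃ g ∈ coxGroup v, ∀ j, y j = (g j : ℂ) * x j}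

/-- The distinguished point `x(σ)` of a cone `σ` (zero on the rays of `σ`, one
elsewhere); for maximal `σ` its orbit is the corresponding torus-fixed point. -/
def distinguishedPt {r : ℕ} (σ : Finset (Fin r)) : Fin r → ℂ :=
  fun j => if j ∈ σ then 0 else 1

private lemma aux_zpow_sum {G : Type*} [CommGroup G] (a : G) {ι : Type*} (s : Finset ι)
    (f : ι → ℤ) : a ^ (∑ i ∈ s, f i) = ∏ i ∈ s, a ^ f i := by
  induction s using Finset.cons_induction with
  | empty => simp
  | cons j s hj ih => simp [Finset.sum_cons, Finset.prod_cons, zpow_add, ih]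

private lemma aux_exists_zpow (c : ℂˣ) {d : ℤ} (hd : d ≠ 0) : ∃ u : ℂˣ, u ^ d = c := by
  have hpos : 0 < d.natAbs := Int.natAbs_pos.2 hd
  obtain ⟨w, hw⟩ := IsAlgClosed.exists_pow_nat_eq (c : ℂ) hpos
  have hw0 : w ≠ 0 := by
    rintro rfl
    rw [zero_pow hpos.ne'] at hw
    exact c.ne_zero hw.symm
  set u0 : ℂˣ := Units.mk0 w hw0 with hu0
  have h1 : u0 ^ d.natAbs = c := by
    ext
    push_cast [hu0]
    exact hw
  rcases Int.natAbs_eq d with h | h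
  · exact ⟨u0, by rw [h, zpow_natCast, h1]⟩
  · refine ⟨u0⁻¹, ?_⟩
    rw [h, zpow_neg, zpow_natCast, inv_pow, inv_inv, h1]


open scoped Classical in
theorem Zhat_is_finite_union_of_fixed_points
    {n r : ℕ} (v : Fin r → Fin n → ℤ) (maxCones : Finset (Finset (Fin r)))
    -- the fan is complete …
    (hcomplete : (⋃ s ∈ maxCones, coneOf v s) = Set.univ)
    -- … and simplicial
    (hsimplicial : ∀ s ∈ maxCones,
      LinearIndependent ℝ (fun j : {j // j ∈ s} => fun i => (v j.val i : ℝ)))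
    -- squarefree monomials with z_0 ⋯ z_n = x_1 ⋯ x_r : the supports partition
    (z : Fin (n + 1) → Finset (Fin r)) (hz : ∀ j : Fin r, ∃! i, j ∈ z i)
    -- the z_i do not vanish simultaneously on X
    (hnv : ¬ ∃ s ∈ maxCones, ∀ i, ∃ j ∈ z i, j ∈ s)
    (k : Fin (n + 1)) :
    -- `W` is the locus in ℂ^r ∖ Z(B) where all z_i, i ≠ k vanish; its image in X is Z_k̂
    (fun W : Set (Fin r → ℂ) =>
      -- Z_k̂ is finite: W is covered by finitely many G-orbits …
      (∃ T : Set (Fin r → ℂ), T.Finite ∧ W ⊆ ⋃ x ∈ T, coxOrbit v x) ∧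
      -- … and precisely, Z_k̂ is the set of torus-fixed points of the maximal cones
      -- containing rays of all colors i ≠ k
      W = ⋃ σ ∈ {σ : Finset (Fin r) | σ ∈ maxCones ∧ ∀ i, i ≠ k → ∃ j ∈ z i, j ∈ σ},
            coxOrbit v (distinguishedPt σ))
      {x ∈ coxU v maxCones | ∀ i, i ≠ k → ∃ j ∈ z i, x j = 0} := by
  classical
  have key : {x ∈ coxU v maxCones | ∀ i, i ≠ k → ∃ j ∈ z i, x j = 0}
      = ⋃ σ ∈ {σ : Finset (Fin r) | σ ∈ maxCones ∧ ∀ i, i ≠ k → ∃ j ∈ z i, j ∈ σ},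
          coxOrbit v (distinguishedPt σ) := by
    apply Set.Subset.antisymm
    · rintro x ⟨⟨s, hs, hzero⟩, hcol⟩
      -- the zero set of x
      set σ₀ : Finset (Fin r) := Finset.univ.filter (fun j => x j = 0) with hσ₀def
      have hmemσ₀ : ∀ j, j ∈ σ₀ ↔ x j = 0 := by simp [hσ₀def]
      have hsub : σ₀ ⊆ s := fun j hj => hzero j ((hmemσ₀ j).1 hj)
      -- card s ≤ n
      have hcard_s : s.card ≤ n := by
        have h := (hsimplicial s hs).fintype_card_le_finrank
        simpa [Module.finrank_fintype_fun_eq_card] using h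
      -- a ray of each color i ≠ k lies in σ₀
      have hchoice : ∀ i : Fin (n+1), i ≠ k → ∃ j, j ∈ z i ∧ x j = 0 := by
        intro i hi
        obtain ⟨j, h1, h2⟩ := hcol i hi
        exact ⟨j, h1, h2⟩
      choose f hf1 hf2 using hchoice
      have hn_le : n ≤ σ₀.card := by
        have hinj : Function.Injective
            (fun i : {i : Fin (n+1) // i ≠ k} =>
              (⟨f i.1 i.2, (hmemσ₀ _).2 (hf2 _ _)⟩ : {j // j ∈ σ₀})) := by
          rintro ⟨i₁, h₁⟩ ⟨i₂, h₂⟩ heq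
          simp only [Subtype.mk.injEq] at heq
          obtain ⟨i', -, huniq⟩ := hz (f i₁ h₁)
          have h3 : f i₁ h₁ ∈ z i₂ := by rw [heq]; exact hf1 i₂ h₂
          exact Subtype.ext ((huniq i₁ (hf1 i₁ h₁)).trans (huniq i₂ h3).symm)
        calc n = Fintype.card {i : Fin (n+1) // i ≠ k} := by
                simp [Fintype.card_subtype_compl]
          _ ≤ Fintype.card {j // j ∈ σ₀} := Fintype.card_le_of_injective _ hinj
          _ = σ₀.card := Fintype.card_coe _
      have hseq : σ₀ = s := Finset.eq_of_subset_of_card_le hsub (hcard_s.trans hn_le)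
      have hfull : ∀ i, i ≠ k → ∃ j ∈ z i, j ∈ s := by
        intro i hi
        exact ⟨f i hi, hf1 _ _, hseq ▸ (hmemσ₀ _).2 (hf2 _ _)⟩
      have hx0 : ∀ j, j ∉ s → x j ≠ 0 := by
        intro j hj hxj
        exact hj (hseq ▸ (hmemσ₀ j).2 hxj)
      have hxs : ∀ j, j ∈ s → x j = 0 := by
        intro j hj
        exact (hmemσ₀ j).1 (hseq ▸ hj)
      -- the matrix of the cone s
      have hs_card : Fintype.card {j // j ∈ s} = n := by
        rw [Fintype.card_coe]
        exact le_antisymm hcard_s (hseq ▸ hn_le)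
      set e : Fin n ≃ {j // j ∈ s} := (Fintype.equivFinOfCardEq hs_card).symm with he
      set A : Matrix (Fin n) (Fin n) ℤ := fun i l => v (e l) i with hA
      have hdet : A.det ≠ 0 := by
        have hli : LinearIndependent ℝ (fun l : Fin n => fun i => (v (e l) i : ℝ)) :=
          (hsimplicial s hs).comp e e.injective
        have hB : LinearIndependent ℝ (fun l => (A.transpose.map (Int.cast : ℤ → ℝ)) l) := hli
        have hU : IsUnit (A.transpose.map (Int.cast : ℤ → ℝ)) :=
          Matrix.linearIndependent_rows_iff_isUnit.1 hB
        have hdu : IsUnit ((A.transpose.map (Int.cast : ℤ → ℝ)).det) :=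
          (Matrix.isUnit_iff_isUnit_det _).1 hU
        have hcast : ((A.det : ℤ) : ℝ) ≠ 0 := by
          have heq2 : ((A.det : ℤ) : ℝ) = (A.transpose.map (Int.cast : ℤ → ℝ)).det := by
            have h3 := RingHom.map_det (Int.castRingHom ℝ) A.transpose
            rw [Matrix.det_transpose] at h3
            exact h3
          rw [heq2]
          exact hdu.ne_zero
        exact_mod_cast hcast
      -- units
      set gout : Fin r → ℂˣ := fun j => if h : x j = 0 then 1 else Units.mk0 (x j) h
        with hgout
      set t : Fin n → ℂˣ := fun i => (∏ j ∈ sᶜ, gout j ^ (v j i))⁻¹ with ht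
      choose u hu using fun i => aux_exists_zpow (t i) hdet
      set g : Fin r → ℂˣ := fun j =>
        if h : j ∈ s then ∏ i, u i ^ (A.adjugate (e.symm ⟨j, h⟩) i) else gout j with hg
      -- the product over s
      have hin : ∀ i, ∏ j ∈ s, g j ^ (v j i) = t i := by
        intro i
        have h1 : ∏ j ∈ s, g j ^ (v j i) = ∏ l : Fin n, g (e l) ^ (v (e l) i) := by
          rw [← Finset.prod_coe_sort s (fun j => g j ^ (v j i))]
          exact (Equiv.prod_comp e (fun j : {j // j ∈ s} => g j.1 ^ (v j.1 i))).symm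
        have h2 : ∀ l : Fin n, g (e l) = ∏ i', u i' ^ (A.adjugate l i') := by
          intro l
          rw [hg]
          simp only [(e l).2, dif_pos]
          congr 1
          simp
        rw [h1]
        calc ∏ l : Fin n, g (e l) ^ (v (e l) i)
            = ∏ l : Fin n, ∏ i', u i' ^ (A.adjugate l i' * (A i l)) := by
              refine Finset.prod_congr rfl fun l _ => ?_
              rw [h2 l, ← Finset.prod_zpow]
              refine Finset.prod_congr rfl fun i' _ => ?_
              rw [zpow_mul]
          _ = ∏ i', u i' ^ (∑ l, A i l * A.adjugate l i') := by
              rw [Finset.prod_comm]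
              refine Finset.prod_congr rfl fun i' _ => ?_
              rw [aux_zpow_sum]
              refine Finset.prod_congr rfl fun l _ => ?_
              rw [mul_comm]
          _ = ∏ i', u i' ^ (if i = i' then A.det else 0) := by
              refine Finset.prod_congr rfl fun i' _ => ?_
              congr 1
              have := congrFun (congrFun (Matrix.mul_adjugate A) i) i'
              rw [Matrix.mul_apply] at this
              rw [this]
              simp [Matrix.one_apply]
          _ = t i := by
              rw [Finset.prod_congr rfl (fun i' _ => apply_ite (u i' ^ · : ℤ → ℂˣ) _ _ _)]
              simp only [zpow_zero]
              rw [Finset.prod_ite_eq]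
              simp [hu i]
      have hGmem : g ∈ coxGroup v := by
        have hQ : ∀ i, ∏ j, g j ^ (v j i) = 1 := by
          intro i
          rw [← Finset.prod_mul_prod_compl s (fun j => g j ^ (v j i)), hin i]
          have : ∏ j ∈ sᶜ, g j ^ (v j i) = ∏ j ∈ sᶜ, gout j ^ (v j i) := by
            refine Finset.prod_congr rfl fun j hj => ?_
            rw [hg]
            simp only [Finset.mem_compl.1 hj, dif_neg, not_false_iff]
          rw [this, ht]
          simp
        intro m
        calc ∏ j, g j ^ (∑ i, m i * v j i)
            = ∏ j, ∏ i, (g j ^ (v j i)) ^ (m i) := by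
              refine Finset.prod_congr rfl fun j _ => ?_
              rw [aux_zpow_sum]
              refine Finset.prod_congr rfl fun i _ => ?_
              rw [← zpow_mul, mul_comm]
          _ = ∏ i, (∏ j, g j ^ (v j i)) ^ (m i) := by
              rw [Finset.prod_comm]
              refine Finset.prod_congr rfl fun i _ => ?_
              rw [Finset.prod_zpow]
          _ = 1 := by
              refine Finset.prod_eq_one fun i _ => ?_
              rw [hQ i]
              simp
      have hxy : ∀ j, x j = (g j : ℂ) * distinguishedPt s j := by
        intro j
        by_cases hj : j ∈ s
        · simp [distinguishedPt, hj, hxs j hj]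
        · have hx := hx0 j hj
          simp only [distinguishedPt, hj, if_neg, mul_one]
          rw [hg]
          simp only [hj, dif_neg, not_false_iff]
          rw [hgout]
          simp [hx]
      simp only [Set.mem_iUnion]
      exact ⟨s, ⟨hs, hfull⟩, g, hGmem, hxy⟩
    · intro y hy
      simp only [Set.mem_iUnion] at hy
      obtain ⟨σ, ⟨hσ, hcolor⟩, g, hgG, hgy⟩ := hy
      refine ⟨⟨σ, hσ, ?_⟩, ?_⟩
      · intro j hj
        by_contra hjs
        have h := hgy j
        rw [hj] at h
        simp [distinguishedPt, hjs] at h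
        exact (g j).ne_zero h.symm
      · intro i hik
        obtain ⟨j, hjz, hjσ⟩ := hcolor i hik
        refine ⟨j, hjz, ?_⟩
        rw [hgy j]
        simp [distinguishedPt, hjσ]
  refine ⟨⟨distinguishedPt ''
      {σ : Finset (Fin r) | σ ∈ maxCones ∧ ∀ i, i ≠ k → ∃ j ∈ z i, j ∈ σ}, ?_, ?_⟩, key⟩
  · exact (maxCones.finite_toSet.subset fun σ h => h.1).image _
  · rw [key]
    intro y hy
    simp only [Set.mem_iUnion] at hy ⊢
    obtain ⟨σ, hσ, hyo⟩ := hy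
    exact ⟨distinguishedPt σ, ⟨σ, hσ, rfl⟩, hyo⟩
end
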